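/- Let G be a nontrivial finite abelian group with exponent exp(G), and let P⁻(exp(G)) denote the smallest prime divisor of exp(G). Then k(G) + 1/exp(G) ≤ K(G) ≤ k(G) + 1/P⁻(exp(G)). -/

import Mathlib

open Finset

def IsIndexedSeq {G : Type*} [AddCommGroup G] (S : Finset (G × ℕ)) : Prop :=
  ∀ x ∈ S, x.1 ≠ 0

def seqSum {G : Type*} [AddCommGroup G] (S : Finset (G × ℕ)) : G :=
  ∑ x ∈ S, x.1

noncomputable def crossNum {G : Type*} [AddCommGroup G] (S : Finset (G × ℕ)) : ℝ :=
  ∑ x ∈ S, (1 : ℝ) / (addOrderOf x.1 : ℝ)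

def ZeroSumFree {G : Type*} [AddCommGroup G] (S : Finset (G × ℕ)) : Prop :=
  ∀ T ⊆ S, T.Nonempty → seqSum T ≠ 0

def IsIrreducibleSeq {G : Type*} [AddCommGroup G] (S : Finset (G × ℕ)) : Prop :=
  S.Nonempty ∧ seqSum S = 0 ∧ ∀ T ⊆ S, T.Nonempty → T ≠ S → seqSum T ≠ 0

def IsFactorization {G : Type*} [AddCommGroup G] (S : Finset (G × ℕ))
    (F : Finset (Finset (G × ℕ))) : Prop :=
  (∀ A ∈ F, IsIrreducibleSeq A) ∧
    (∀ A ∈ F, ∀ B ∈ F, A ≠ B → Disjoint A B) ∧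
    (∀ x, x ∈ S ↔ ∃ A ∈ F, x ∈ A)

def IsUFIS {G : Type*} [AddCommGroup G] (S : Finset (G × ℕ)) : Prop :=
  IsIndexedSeq S ∧ seqSum S = 0 ∧ ∃! F, IsFactorization S F

noncomputable def littleK (G : Type*) [AddCommGroup G] : ℝ :=
  sSup {x : ℝ | ∃ S : Finset (G × ℕ), IsIndexedSeq S ∧ ZeroSumFree S ∧ crossNum S = x}

noncomputable def bigK (G : Type*) [AddCommGroup G] : ℝ :=
  sSup {x : ℝ | ∃ S : Finset (G × ℕ), IsIndexedSeq S ∧ IsIrreducibleSeq S ∧ crossNum S = x}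

noncomputable def K1 (G : Type*) [AddCommGroup G] : ℝ :=
  sSup {x : ℝ | ∃ S : Finset (G × ℕ), IsUFIS S ∧ crossNum S = x}

def DenseZSF {G : Type*} [AddCommGroup G] (S : Finset (G × ℕ)) : Prop :=
  IsIndexedSeq S ∧ ZeroSumFree S ∧ crossNum S = littleK G ∧
    ∀ T : Finset (G × ℕ), IsIndexedSeq T → ZeroSumFree T → crossNum T = littleK G →
      S.card ≤ T.card

def DenseUFIS {G : Type*} [AddCommGroup G] (S : Finset (G × ℕ)) : Prop :=
  IsUFIS S ∧ crossNum S = K1 G ∧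
    ∀ T : Finset (G × ℕ), IsUFIS T → crossNum T = K1 G → S.card ≤ T.card

def WidePrime (p n : ℕ) : Prop :=
  ¬ p ∣ n ∧
    (p : ℝ) / ((p : ℝ) - 1) ≥
      ∏ q ∈ n.primeFactors,
        ((q : ℝ) ^ (n.factorization q + 1) - 1) /
          ((q : ℝ) ^ (n.factorization q + 1) - (q : ℝ) ^ (n.factorization q))

def Wide2Prime (p n : ℕ) : Prop :=
  ¬ p ∣ n ∧
    ((p : ℝ) ^ 2 + 2 * (p : ℝ) - 2) / (p : ℝ) ^ 2 ≥
      ∏ q ∈ n.primeFactors,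
        ((q : ℝ) ^ (n.factorization q + 1) - 1) /
          ((q : ℝ) ^ (n.factorization q + 1) - (q : ℝ) ^ (n.factorization q))

def IsWideNat (n : ℕ) : Prop :=
  0 < n ∧ ∀ q ∈ n.primeFactors,
    WidePrime q (∏ q' ∈ n.primeFactors.filter (fun q' => q < q'), q' ^ n.factorization q')

def Is2WideNat (n : ℕ) : Prop :=
  0 < n ∧ ∀ q ∈ n.primeFactors,
    Wide2Prime q (∏ q' ∈ n.primeFactors.filter (fun q' => q < q'), q' ^ n.factorization q')

/-!
Removing a term `a` from an irreducible sequence `S` leaves a zero-sum free sequence, so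
`k(S) ≤ k(G) + 1/ord(a)`; conversely, appending `-σ(S)` to a nonempty zero-sum free sequence `S`
makes it irreducible, so `k(S) + 1/ord(σ(S)) ≤ K(G)`. Every nonzero order lies between the least
prime divisor of `exp(G)` and `exp(G)`. Both suprema are finite because a zero-sum free sequence
contains fewer than `ord g` terms equal to `g`, hence has cross number at most `|G|`.
-/

section Sequences

variable {G : Type*} [AddCommGroup G]

theorem seqSum_sdiff [DecidableEq G] {S T : Finset (G × ℕ)} (h : T ⊆ S) :
    seqSum (S \ T) = seqSum S - seqSum T :=
  Finset.sum_sdiff_eq_sub h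

theorem seqSum_eq_card_nsmul {S : Finset (G × ℕ)} {g : G} (h : ∀ x ∈ S, x.1 = g) :
    seqSum S = S.card • g := by
  rw [seqSum, Finset.sum_congr rfl h, Finset.sum_const]

theorem crossNum_insert [DecidableEq G] {S : Finset (G × ℕ)} {a : G × ℕ} (ha : a ∉ S) :
    crossNum (insert a S) = 1 / (addOrderOf a.1 : ℝ) + crossNum S :=
  Finset.sum_insert ha

theorem zeroSumFree_empty : ZeroSumFree (∅ : Finset (G × ℕ)) := by
  intro T hT hne
  rw [Finset.subset_empty.mp hT] at hne
  exact absurd hne Finset.not_nonempty_empty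

theorem zeroSumFree_singleton {g : G} (hg : g ≠ 0) (n : ℕ) : ZeroSumFree {(g, n)} := by
  intro T hT hne
  rwa [(Finset.Nonempty.subset_singleton_iff hne).mp hT, seqSum, Finset.sum_singleton]

theorem isIndexedSeq_singleton {g : G} (hg : g ≠ 0) (n : ℕ) : IsIndexedSeq {(g, n)} := by
  simpa [IsIndexedSeq] using hg

theorem crossNum_nonneg (S : Finset (G × ℕ)) : 0 ≤ crossNum S :=
  Finset.sum_nonneg fun _ _ => by positivity

theorem ZeroSumFree.seqSum_ne_zero {S : Finset (G × ℕ)} (hS : ZeroSumFree S)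
    (hne : S.Nonempty) : seqSum S ≠ 0 :=
  hS S subset_rfl hne

theorem IsIrreducibleSeq.zeroSumFree_erase [DecidableEq G] {S : Finset (G × ℕ)}
    (hS : IsIrreducibleSeq S) {a : G × ℕ} (ha : a ∈ S) : ZeroSumFree (S.erase a) :=
  fun T hT hne => hS.2.2 T (hT.trans (S.erase_subset a)) hne
    fun hTS => Finset.notMem_erase a S (hT (hTS ▸ ha))

/-- A proper zero-sum subset `T` of `insert a S` either avoids `a`, or its complement is a
nonempty zero-sum subset of `S`. -/
theorem ZeroSumFree.isIrreducibleSeq_insert [DecidableEq G] {S : Finset (G × ℕ)}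
    (hS : ZeroSumFree S) {a : G × ℕ} (ha : a ∉ S) (hsum : a.1 + seqSum S = 0) :
    IsIrreducibleSeq (insert a S) := by
  have hzero : seqSum (insert a S) = 0 := by rw [seqSum, Finset.sum_insert ha]; exact hsum
  refine ⟨Finset.insert_nonempty a S, hzero, fun T hT hne hTS hT0 => ?_⟩
  by_cases haT : a ∈ T
  · have hcompl : insert a S \ T ⊆ S := by
      intro x hx
      obtain ⟨hxS, hxT⟩ := Finset.mem_sdiff.mp hx
      exact (Finset.mem_insert.mp hxS).resolve_left fun hxa => hxT (hxa ▸ haT)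
    refine hS _ hcompl ?_ (by rw [seqSum_sdiff hT, hzero, hT0, sub_zero])
    exact Finset.sdiff_nonempty.mpr fun h => hTS (hT.antisymm h)
  · exact hS T (fun x hx => (Finset.mem_insert.mp (hT hx)).resolve_left
      fun hxa => haT (hxa ▸ hx)) hne hT0

theorem ZeroSumFree.exists_isIrreducibleSeq [DecidableEq G] {S : Finset (G × ℕ)}
    (hS : ZeroSumFree S) (hI : IsIndexedSeq S) (hne : S.Nonempty) :
    ∃ T : Finset (G × ℕ), IsIndexedSeq T ∧ IsIrreducibleSeq T ∧
      crossNum T = 1 / (addOrderOf (-seqSum S) : ℝ) + crossNum S := by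
  obtain ⟨n, hn⟩ := Infinite.exists_notMem_finset (S.image Prod.snd : Finset ℕ)
  have ha : (-seqSum S, n) ∉ S := fun h => hn (Finset.mem_image_of_mem Prod.snd h)
  refine ⟨insert (-seqSum S, n) S, ?_, hS.isIrreducibleSeq_insert ha (neg_add_cancel _),
    crossNum_insert ha⟩
  intro x hx
  rcases Finset.mem_insert.mp hx with rfl | hx
  · exact neg_ne_zero.mpr (hS.seqSum_ne_zero hne)
  · exact hI x hx

theorem ZeroSumFree.card_filter_fst_eq_lt [Finite G] [DecidableEq G] {S : Finset (G × ℕ)}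
    (hS : ZeroSumFree S) (g : G) : (S.filter fun x : G × ℕ => x.1 = g).card < addOrderOf g := by
  by_contra! hle
  obtain ⟨T, hT, hcard⟩ := Finset.exists_subset_card_eq hle
  refine hS T (hT.trans (Finset.filter_subset _ S)) ?_ ?_
  · exact Finset.card_pos.mp (hcard ▸ addOrderOf_pos g)
  · rw [seqSum_eq_card_nsmul fun x hx => (Finset.mem_filter.mp (hT hx)).2, hcard,
      addOrderOf_nsmul_eq_zero]

theorem ZeroSumFree.crossNum_le_card [Fintype G] [DecidableEq G] {S : Finset (G × ℕ)}
    (hS : ZeroSumFree S) : crossNum S ≤ Fintype.card G := by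
  rw [crossNum, ← Finset.sum_fiberwise S Prod.fst]
  calc ∑ g : G, ∑ x ∈ S with x.1 = g, (1 : ℝ) / (addOrderOf x.1 : ℝ)
      = ∑ g : G, ((S.filter fun x : G × ℕ => x.1 = g).card : ℝ) / (addOrderOf g : ℝ) := by
        refine Finset.sum_congr rfl fun g _ => ?_
        rw [Finset.sum_congr rfl fun x hx => by rw [(Finset.mem_filter.mp hx).2],
          Finset.sum_const, nsmul_eq_mul, mul_one_div]
    _ ≤ ∑ _g : G, (1 : ℝ) := by
        refine Finset.sum_le_sum fun g _ => div_le_one_of_le₀ ?_ (Nat.cast_nonneg _)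
        exact_mod_cast (hS.card_filter_fst_eq_lt g).le
    _ = Fintype.card G := by simp

theorem IsIrreducibleSeq.crossNum_le_card_add_one [Fintype G] [DecidableEq G]
    {S : Finset (G × ℕ)} (hS : IsIrreducibleSeq S) : crossNum S ≤ Fintype.card G + 1 := by
  obtain ⟨a, ha⟩ := hS.1
  rw [← Finset.insert_erase ha, crossNum_insert (Finset.notMem_erase a S)]
  have hinv : 1 / (addOrderOf a.1 : ℝ) ≤ 1 := by
    rw [one_div]; exact Nat.cast_inv_le_one _
  linarith [(hS.zeroSumFree_erase ha).crossNum_le_card]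

theorem one_div_exponent_le_one_div_addOrderOf [Finite G] (g : G) :
    1 / (AddMonoid.exponent G : ℝ) ≤ 1 / (addOrderOf g : ℝ) := by
  have hexp : 0 < AddMonoid.exponent G := AddMonoid.exponent_pos.mpr .of_finite
  refine one_div_le_one_div_of_le (by exact_mod_cast addOrderOf_pos g) ?_
  exact_mod_cast Nat.le_of_dvd hexp (AddMonoid.addOrder_dvd_exponent g)

theorem one_div_addOrderOf_le_one_div_minFac_exponent [Finite G] {g : G} (hg : g ≠ 0) :
    1 / (addOrderOf g : ℝ) ≤ 1 / ((AddMonoid.exponent G).minFac : ℝ) := by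
  have hord : 2 ≤ addOrderOf g := by
    have := addOrderOf_pos g
    have : addOrderOf g ≠ 1 := mt AddMonoid.addOrderOf_eq_one_iff.mp hg
    omega
  refine one_div_le_one_div_of_le (by exact_mod_cast (AddMonoid.exponent G).minFac_pos) ?_
  exact_mod_cast Nat.minFac_le_of_dvd hord (AddMonoid.addOrder_dvd_exponent g)

end Sequences

section CrossNumbers

variable {G : Type*} [AddCommGroup G] [Fintype G]

theorem crossNum_le_littleK {S : Finset (G × ℕ)} (hI : IsIndexedSeq S) (hS : ZeroSumFree S) :
    crossNum S ≤ littleK G := by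
  classical
  exact le_csSup ⟨Fintype.card G, fun _ ⟨_, _, hT, hx⟩ => hx ▸ hT.crossNum_le_card⟩
    ⟨S, hI, hS, rfl⟩

theorem crossNum_le_bigK {S : Finset (G × ℕ)} (hI : IsIndexedSeq S) (hS : IsIrreducibleSeq S) :
    crossNum S ≤ bigK G := by
  classical
  exact le_csSup
    ⟨Fintype.card G + 1, fun _ ⟨_, _, hT, hx⟩ => hx ▸ hT.crossNum_le_card_add_one⟩
    ⟨S, hI, hS, rfl⟩

theorem crossNum_add_one_div_exponent_le_bigK {S : Finset (G × ℕ)} (hI : IsIndexedSeq S)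
    (hS : ZeroSumFree S) (hne : S.Nonempty) :
    crossNum S + 1 / (AddMonoid.exponent G : ℝ) ≤ bigK G := by
  classical
  obtain ⟨T, hTI, hT, hcross⟩ := hS.exists_isIrreducibleSeq hI hne
  linarith [crossNum_le_bigK hTI hT, one_div_exponent_le_one_div_addOrderOf (-seqSum S)]

theorem littleK_add_one_div_exponent_le_bigK [Nontrivial G] :
    littleK G + 1 / (AddMonoid.exponent G : ℝ) ≤ bigK G := by
  obtain ⟨g, hg⟩ := exists_ne (0 : G)
  refine le_sub_iff_add_le.mp (csSup_le ⟨0, ∅, by simp [IsIndexedSeq], zeroSumFree_empty,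
    by simp [crossNum]⟩ ?_)
  rintro _ ⟨S, hI, hS, rfl⟩
  rcases S.eq_empty_or_nonempty with rfl | hne
  · have hsingle := crossNum_add_one_div_exponent_le_bigK
      (isIndexedSeq_singleton hg 0) (zeroSumFree_singleton hg 0) (singleton_nonempty _)
    rw [crossNum, Finset.sum_empty]
    linarith [crossNum_nonneg {(g, 0)}]
  · linarith [crossNum_add_one_div_exponent_le_bigK hI hS hne]

theorem bigK_le_littleK_add_one_div_minFac_exponent [Nontrivial G] :
    bigK G ≤ littleK G + 1 / ((AddMonoid.exponent G).minFac : ℝ) := by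
  classical
  obtain ⟨g, hg⟩ := exists_ne (0 : G)
  obtain ⟨T, hTI, hT, -⟩ := (zeroSumFree_singleton hg 0).exists_isIrreducibleSeq
    (isIndexedSeq_singleton hg 0) (singleton_nonempty _)
  refine csSup_le ⟨_, T, hTI, hT, rfl⟩ ?_
  rintro _ ⟨S, hI, hS, rfl⟩
  obtain ⟨a, ha⟩ := hS.1
  rw [← Finset.insert_erase ha, crossNum_insert (Finset.notMem_erase a S)]
  linarith [crossNum_le_littleK (fun x hx => hI x (Finset.mem_of_mem_erase hx))
    (hS.zeroSumFree_erase ha), one_div_addOrderOf_le_one_div_minFac_exponent (hI a ha)]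

end CrossNumbers

theorem stmt13 (G : Type*) [AddCommGroup G] [Fintype G] [Nontrivial G] :
    littleK G + 1 / (AddMonoid.exponent G : ℝ) ≤ bigK G ∧
      bigK G ≤ littleK G + 1 / ((AddMonoid.exponent G).minFac : ℝ) :=
  ⟨littleK_add_one_div_exponent_le_bigK, bigK_le_littleK_add_one_div_minFac_exponent⟩
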